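/- arXiv:1912.06989 — 2 statements merged into one kernel-verified Lean document; each statement's English description precedes it below -/
import Mathlib

section
/- Let Φ ∈ ℝ^{l×n} with n ≤ l, singular values σ_1 ≥ ··· ≥ σ_n, let 0 < p ≤ 1, let 1 ≤ s ≤ n, and let K = ΦᵀΦ. Then Σ_{i=s+1}^{n} σ_i^p = Tr(K^{p/2}) − max{ Tr((PᵀKP)^{p/2}) : P ∈ ℝ^{n×s}, PᵀP = I_s }. -/
/-!
Write `K = V diag(λ) Vᵀ` with `λ = σ²` decreasing. Orthogonal conjugation preserves the
characteristic polynomial, so `Tr(K^{p/2}) = ∑ σᵢ^p`, and the first `s` columns of `V`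
compress `K` to `diag(λ₁, …, λₛ)`, which gives the value `∑_{i ≤ s} σᵢ^p`. Conversely, for an
isometry `P` the eigenvalues `μ` of `PᵀKP` interlace with `λ`: for every threshold `c`, at most
as many `μ` as `λ` exceed `c`, because `P` followed by the orthogonal projection onto the
eigenvectors of `K` above `c` is injective on the eigenvectors of `PᵀKP` above `c` (compare the
Rayleigh quotients). Hence the decreasing rearrangement of `μ` lies below `(λ₁, …, λₛ)`, and
`x ↦ x^{p/2}` is monotone on `[0, ∞)`.
-/

open scoped Matrix

/-- `Tr(A^r)` for a symmetric PSD matrix, defined spectrally as the sum of the `r`-th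
powers of the eigenvalues. -/
noncomputable def trRpow {n : ℕ} (A : Matrix (Fin n) (Fin n) ℝ) (r : ℝ) : ℝ :=
  if h : A.IsHermitian then ∑ i, (h.eigenvalues i) ^ r else 0

open Finset

namespace Matrix

theorem transpose_submatrix_mul_mul_submatrix {l m n R : Type*} [Fintype m]
    [NonUnitalNonAssocSemiring R] (A : Matrix m n R) (B : Matrix m m R) (e : l → n) :
    (A.submatrix id e)ᵀ * B * A.submatrix id e = (Aᵀ * B * A).submatrix e e := by
  rw [submatrix_mul _ _ _ id _ Function.bijective_id,
    submatrix_mul _ _ _ id _ Function.bijective_id]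
  rfl

theorem transpose_mul_submatrix_eq_one {l m n R : Type*} [Fintype m] [DecidableEq l]
    [DecidableEq m] [DecidableEq n] [CommSemiring R] {V : Matrix m n R} (hV : Vᵀ * V = 1)
    (e : l ↪ n) : (V.submatrix id e)ᵀ * V.submatrix id e = 1 := by
  have h := transpose_submatrix_mul_mul_submatrix V 1 e
  rw [Matrix.mul_one, Matrix.mul_one, hV] at h
  rw [h, submatrix_one_embedding]

variable {m n : Type*} [Fintype m] [Fintype n]

theorem dotProduct_mulVec_transpose_mul_mul {R : Type*} [CommSemiring R] (G : Matrix m n R)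
    (A : Matrix m m R) (v : n → R) :
    v ⬝ᵥ ((Gᵀ * A * G) *ᵥ v) = (G *ᵥ v) ⬝ᵥ (A *ᵥ (G *ᵥ v)) := by
  rw [← mulVec_mulVec, ← mulVec_mulVec, dotProduct_mulVec, vecMul_transpose]

variable [DecidableEq m] [DecidableEq n]

theorem IsHermitian.exists_transpose_mul_mul_eq_diagonal {A : Matrix n n ℝ}
    (hA : A.IsHermitian) :
    ∃ Q : Matrix n n ℝ, Qᵀ * Q = 1 ∧ Qᵀ * A * Q = diagonal hA.eigenvalues := by
  have hQ := Unitary.coe_star_mul_self hA.eigenvectorUnitary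
  simp only [star_eq_conjTranspose, conjTranspose_eq_transpose_of_trivial] at hQ
  refine ⟨hA.eigenvectorUnitary, hQ, ?_⟩
  simpa [Unitary.conjStarAlgAut_star_apply, star_eq_conjTranspose] using
    hA.conjStarAlgAut_star_eigenvectorUnitary

theorem roots_charpoly_of_eq_mul_diagonal_mul_transpose {A U : Matrix n n ℝ} (hU : Uᵀ * U = 1)
    {d : n → ℝ} (hA : A = U * diagonal d * Uᵀ) :
    A.charpoly.roots = Multiset.map d univ.val := by
  have hchar : A.charpoly = (diagonal d).charpoly := by
    rw [hA, charpoly_mul_comm, ← Matrix.mul_assoc, hU, Matrix.one_mul]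
  rw [hchar, charpoly_diagonal,
    Polynomial.roots_prod _ _ (by simp [prod_ne_zero_iff, Polynomial.X_sub_C_ne_zero])]
  simp

theorem IsHermitian.sum_comp_eigenvalues_eq {A U : Matrix n n ℝ} (hA : A.IsHermitian)
    (hU : Uᵀ * U = 1) {d : n → ℝ} (hAd : A = U * diagonal d * Uᵀ) (f : ℝ → ℝ) :
    ∑ i, f (hA.eigenvalues i) = ∑ i, f (d i) := by
  have h := hA.roots_charpoly_eq_eigenvalues
  rw [roots_charpoly_of_eq_mul_diagonal_mul_transpose hU hAd] at h
  simp only [RCLike.ofReal_real_eq_id, Function.id_comp] at h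
  simpa [Multiset.map_map] using congrArg (fun s => (s.map f).sum) h.symm

theorem dotProduct_diagonal_mulVec_le {R : Type*} [CommRing R] [LinearOrder R]
    [IsStrictOrderedRing R] {d v : n → R} {c : R} (h : ∀ i, v i ≠ 0 → d i ≤ c) :
    v ⬝ᵥ (diagonal d *ᵥ v) ≤ c * (v ⬝ᵥ v) := by
  simp only [dotProduct, mulVec_diagonal, mul_sum]
  refine sum_le_sum fun i _ => ?_
  rcases eq_or_ne (v i) 0 with hv | hv
  · simp [hv]
  · nlinarith [h i hv, mul_self_nonneg (v i)]

theorem lt_dotProduct_diagonal_mulVec {R : Type*} [CommRing R] [LinearOrder R]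
    [IsStrictOrderedRing R] {d v : n → R} {c : R} (h : ∀ i, v i ≠ 0 → c < d i)
    (hv : v ≠ 0) : c * (v ⬝ᵥ v) < v ⬝ᵥ (diagonal d *ᵥ v) := by
  obtain ⟨i₀, hi₀⟩ := Function.ne_iff.mp hv
  simp only [dotProduct, mulVec_diagonal, mul_sum]
  refine sum_lt_sum (fun i _ => ?_) ⟨i₀, mem_univ _, ?_⟩
  · rcases eq_or_ne (v i) 0 with hv | hv
    · simp [hv]
    · nlinarith [h i hv, mul_self_nonneg (v i)]
  · nlinarith [h i₀ hi₀, mul_self_pos.mpr hi₀]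

theorem eq_zero_of_compression {R : Type*} [CommRing R] [LinearOrder R] [IsStrictOrderedRing R]
    {G : Matrix m n R} (hG : Gᵀ * G = 1) {κ : m → R} {μ : n → R}
    (hGκ : Gᵀ * diagonal κ * G = diagonal μ) {c : R} {v : n → R}
    (hvμ : ∀ j, v j ≠ 0 → c < μ j) (hGvκ : ∀ i, (G *ᵥ v) i ≠ 0 → κ i ≤ c) : v = 0 := by
  by_contra hv
  have hnorm : (G *ᵥ v) ⬝ᵥ (G *ᵥ v) = v ⬝ᵥ v := by
    simpa [hG] using (dotProduct_mulVec_transpose_mul_mul G 1 v).symm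
  have := calc
    c * (v ⬝ᵥ v) < v ⬝ᵥ (diagonal μ *ᵥ v) := lt_dotProduct_diagonal_mulVec hvμ hv
    _ = (G *ᵥ v) ⬝ᵥ (diagonal κ *ᵥ (G *ᵥ v)) := by
      rw [← hGκ, dotProduct_mulVec_transpose_mul_mul]
    _ ≤ c * (v ⬝ᵥ v) := hnorm ▸ dotProduct_diagonal_mulVec_le hGvκ
  exact lt_irrefl _ this

/-- The counting form of Cauchy interlacing. -/
theorem card_lt_le_card_lt_of_compression {R : Type*} [Field R] [LinearOrder R]
    [IsStrictOrderedRing R] {G : Matrix m n R} (hG : Gᵀ * G = 1) {κ : m → R}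
    {μ : n → R} (hGκ : Gᵀ * diagonal κ * G = diagonal μ) (c : R) :
    #{j | c < μ j} ≤ #{i | c < κ i} := by
  let S := {j // c < μ j}
  let T := {i // c < κ i}
  let L : (S → R) →ₗ[R] T → R := LinearMap.funLeft R R Subtype.val ∘ₗ G.mulVecLin ∘ₗ
    Function.ExtendByZero.linearMap R Subtype.val
  have hL : Function.Injective L := by
    rw [← LinearMap.ker_eq_bot, LinearMap.ker_eq_bot']
    intro a ha
    have hv0 : Function.extend Subtype.val a 0 = 0 := by
      refine eq_zero_of_compression hG hGκ (c := c) (fun j hj => ?_) fun i hi => ?_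
      · by_contra h
        exact hj (Function.extend_apply' _ _ _ fun ⟨j', hj'⟩ => h (hj' ▸ j'.2))
      · by_contra h
        exact hi (congrFun ha ⟨i, not_le.mp h⟩)
    funext j
    simpa [Subtype.val_injective.extend_apply] using congrFun hv0 j
  simpa [S, T, Fintype.card_subtype] using LinearMap.finrank_le_finrank_of_injective hL

end Matrix

theorem Antitone.card_lt_apply_le {α : Type*} [Preorder α] [DecidableLT α] {n : ℕ}
    {f : Fin n → α} (hf : Antitone f) (k : Fin n) : #{i | f k < f i} ≤ k := by
  calc #{i | f k < f i} ≤ #(Iio k) := card_le_card fun i hi =>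
        mem_Iio.mpr (lt_of_not_ge fun hki => (mem_filter.mp hi).2.not_ge (hf hki))
    _ = k := Fin.card_Iio k

/-- The decreasing rearrangement of `μ` lies below `ν` pointwise. -/
theorem sum_comp_le_sum_comp_of_card_lt_le {α β : Type*} [LinearOrder α] [AddCommMonoid β]
    [PartialOrder β] [IsOrderedAddMonoid β] {s : ℕ} {μ ν : Fin s → α}
    (hcount : ∀ j, #{t | ν j < μ t} ≤ j) {f : α → β} {S : Set α} (hf : MonotoneOn f S)
    (hμ : ∀ t, μ t ∈ S) (hν : ∀ j, ν j ∈ S) :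
    ∑ t, f (μ t) ≤ ∑ j, f (ν j) := by
  let e : Equiv.Perm (Fin s) := Fin.revPerm.trans (Tuple.sort μ)
  have he : Antitone (μ ∘ e) := (Tuple.monotone_sort μ).comp_antitone Fin.rev_anti
  have hle : ∀ j, μ (e j) ≤ ν j := fun j => by
    by_contra! hlt
    have hsub : (Iic j).map e.toEmbedding ⊆ ({t | ν j < μ t} : Finset _) := fun t ht => by
      obtain ⟨k, hk, rfl⟩ := mem_map.mp ht
      simpa using hlt.trans_le (he (mem_Iic.mp hk))
    have := (card_le_card hsub).trans (hcount j)
    simp at this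
  calc ∑ t, f (μ t) = ∑ j, f (μ (e j)) := (Equiv.sum_comp e fun t => f (μ t)).symm
    _ ≤ ∑ j, f (ν j) := sum_le_sum fun j _ => hf (hμ _) (hν j) (hle j)

theorem Fin.sum_filter_val_lt_eq_sum_castLE {M : Type*} [AddCommMonoid M] {n s : ℕ}
    (h : s ≤ n) (f : Fin n → M) :
    ∑ i ∈ univ.filter (fun i : Fin n => (i : ℕ) < s), f i =
      ∑ j : Fin s, f (Fin.castLE h j) := by
  have hfilter : univ.filter (fun i : Fin n => (i : ℕ) < s) = univ.map (Fin.castLEEmb h) := by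
    ext i
    simp only [mem_filter, mem_univ, true_and, mem_map, Fin.castLEEmb_apply]
    exact ⟨fun hi => ⟨⟨i, hi⟩, rfl⟩, by rintro ⟨j, rfl⟩; exact j.2⟩
  rw [hfilter, sum_map]
  rfl

section Compression

open Matrix

variable {n s : ℕ} {K V : Matrix (Fin n) (Fin n) ℝ} {κ : Fin n → ℝ}

theorem trRpow_eq_sum_of_eq_mul_diagonal_mul_transpose {A U : Matrix (Fin n) (Fin n) ℝ}
    (hU : Uᵀ * U = 1) {d : Fin n → ℝ} (hA : A = U * diagonal d * Uᵀ) (r : ℝ) :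
    trRpow A r = ∑ i, d i ^ r := by
  have hAh : A.IsHermitian := by
    simpa [hA] using isHermitian_mul_mul_conjTranspose U (isHermitian_diagonal d)
  rw [trRpow, dif_pos hAh]
  exact hAh.sum_comp_eigenvalues_eq hU hA (· ^ r)

theorem trRpow_transpose_mul_mul_le (hsn : s ≤ n) (hV : Vᵀ * V = 1) (hκ0 : 0 ≤ κ)
    (hκ : Antitone κ) (hK : K = V * diagonal κ * Vᵀ) {P : Matrix (Fin n) (Fin s) ℝ}
    (hP : Pᵀ * P = 1) {r : ℝ} (hr : 0 ≤ r) :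
    trRpow (Pᵀ * K * P) r ≤ ∑ j : Fin s, κ (Fin.castLE hsn j) ^ r := by
  have hVV : V * Vᵀ = 1 := mul_eq_one_comm.mp hV
  have hBpsd : (Pᵀ * K * P).PosSemidef := by
    have hKpsd : K.PosSemidef := by
      simpa [hK] using (PosSemidef.diagonal hκ0).mul_mul_conjTranspose_same V
    simpa using hKpsd.conjTranspose_mul_mul_same P
  obtain ⟨Q, hQ, hBQ⟩ := hBpsd.isHermitian.exists_transpose_mul_mul_eq_diagonal
  have hG : (Vᵀ * P * Q)ᵀ * (Vᵀ * P * Q) = 1 := by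
    simp only [transpose_mul, transpose_transpose, Matrix.mul_assoc]
    rw [← Matrix.mul_assoc V, hVV, Matrix.one_mul, ← Matrix.mul_assoc Pᵀ, hP, Matrix.one_mul,
      hQ]
  have hGκ : (Vᵀ * P * Q)ᵀ * diagonal κ * (Vᵀ * P * Q) =
      diagonal hBpsd.isHermitian.eigenvalues := by
    rw [← hBQ, hK]
    simp only [transpose_mul, transpose_transpose, Matrix.mul_assoc]
  have hcount : ∀ j : Fin s,
      #{t | κ (Fin.castLE hsn j) < hBpsd.isHermitian.eigenvalues t} ≤ j := fun j =>
    (card_lt_le_card_lt_of_compression hG hGκ _).trans (hκ.card_lt_apply_le _)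
  rw [trRpow, dif_pos hBpsd.isHermitian]
  exact sum_comp_le_sum_comp_of_card_lt_le hcount
    (Real.monotoneOn_rpow_Ici_of_exponent_nonneg hr) hBpsd.eigenvalues_nonneg fun j => hκ0 _

theorem trRpow_transpose_mul_mul_submatrix_castLE (hsn : s ≤ n) (hV : Vᵀ * V = 1)
    (hK : K = V * diagonal κ * Vᵀ) (r : ℝ) :
    trRpow ((V.submatrix id (Fin.castLE hsn))ᵀ * K * V.submatrix id (Fin.castLE hsn)) r =
      ∑ j : Fin s, κ (Fin.castLE hsn j) ^ r := by
  have hVKV : Vᵀ * K * V = diagonal κ := by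
    rw [hK, ← Matrix.mul_assoc, ← Matrix.mul_assoc, hV, Matrix.one_mul, Matrix.mul_assoc, hV,
      Matrix.mul_one]
  rw [transpose_submatrix_mul_mul_submatrix, hVKV]
  exact trRpow_eq_sum_of_eq_mul_diagonal_mul_transpose (U := 1) (by simp)
    (by simpa [Function.comp_def] using submatrix_diagonal_embedding κ (Fin.castLEEmb hsn)) r

theorem isGreatest_trRpow_transpose_mul_mul (hsn : s ≤ n) (hV : Vᵀ * V = 1) (hκ0 : 0 ≤ κ)
    (hκ : Antitone κ) (hK : K = V * diagonal κ * Vᵀ) {r : ℝ} (hr : 0 ≤ r) :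
    IsGreatest {t : ℝ | ∃ P : Matrix (Fin n) (Fin s) ℝ, Pᵀ * P = 1 ∧ t = trRpow (Pᵀ * K * P) r}
      (∑ j : Fin s, κ (Fin.castLE hsn j) ^ r) := by
  refine ⟨⟨_, transpose_mul_submatrix_eq_one hV (Fin.castLEEmb hsn),
    (trRpow_transpose_mul_mul_submatrix_castLE hsn hV hK r).symm⟩, ?_⟩
  rintro t ⟨P, hP, rfl⟩
  exact trRpow_transpose_mul_mul_le hsn hV hκ0 hκ hK hP hr

end Compression

theorem stmt5_general (n s : ℕ) (hsn : s ≤ n)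
    (p : ℝ) (hp0 : 0 < p)
    (K : Matrix (Fin n) (Fin n) ℝ)
    (σ : Fin n → ℝ) (hσpos : ∀ i, 0 ≤ σ i) (hsort : Antitone σ)
    (V : Matrix (Fin n) (Fin n) ℝ) (hV : Vᵀ * V = 1)
    (hVK : K = V * Matrix.diagonal (fun i => σ i ^ 2) * Vᵀ) :
    ∃ M : ℝ,
      IsGreatest
        {t : ℝ | ∃ P : Matrix (Fin n) (Fin s) ℝ, Pᵀ * P = 1 ∧ t = trRpow (Pᵀ * K * P) (p / 2)}
        M ∧
      ∑ i ∈ Finset.univ.filter (fun i : Fin n => s ≤ (i : ℕ)), σ i ^ p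
        = trRpow K (p / 2) - M := by
  have hsq_anti : Antitone fun i => σ i ^ 2 := fun i j hij =>
    pow_le_pow_left₀ (hσpos j) (hsort hij) 2
  have hrpow : ∀ i, (σ i ^ 2) ^ (p / 2) = σ i ^ p := fun i => by
    rw [← Real.rpow_natCast, ← Real.rpow_mul (hσpos i)]
    ring_nf
  refine ⟨_, isGreatest_trRpow_transpose_mul_mul hsn hV (fun i => sq_nonneg (σ i)) hsq_anti hVK
    (by positivity), ?_⟩
  rw [trRpow_eq_sum_of_eq_mul_diagonal_mul_transpose hV hVK,
    ← sum_filter_add_sum_filter_not univ (fun i : Fin n => s ≤ (i : ℕ))]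
  simp only [hrpow, not_le, Fin.sum_filter_val_lt_eq_sum_castLE hsn]
  ring

/-- with singular values `σ₁ ≥ ⋯ ≥ σₙ ≥ 0` of `Φ` (so `K = ΦᵀΦ` has the
spectral decomposition `V diag(σ²) Vᵀ`), `Σ_{i>s} σ_i^p` equals
`Tr(K^{p/2})` minus the maximum of `Tr((PᵀKP)^{p/2})` over `PᵀP = I_s`. -/
theorem stmt5 (l n s : ℕ) (hnl : n ≤ l) (hs1 : 1 ≤ s) (hsn : s ≤ n)
    (p : ℝ) (hp0 : 0 < p) (hp1 : p ≤ 1)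
    (Φ : Matrix (Fin l) (Fin n) ℝ)
    (K : Matrix (Fin n) (Fin n) ℝ) (hKdef : K = Φᵀ * Φ)
    (σ : Fin n → ℝ) (hσpos : ∀ i, 0 ≤ σ i) (hsort : Antitone σ)
    (V : Matrix (Fin n) (Fin n) ℝ) (hV : Vᵀ * V = 1)
    (hVK : K = V * Matrix.diagonal (fun i => σ i ^ 2) * Vᵀ) :
    ∃ M : ℝ,
      IsGreatest
        {t : ℝ | ∃ P : Matrix (Fin n) (Fin s) ℝ, Pᵀ * P = 1 ∧ t = trRpow (Pᵀ * K * P) (p / 2)}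
        M ∧
      ∑ i ∈ Finset.univ.filter (fun i : Fin n => s ≤ (i : ℕ)), σ i ^ p
        = trRpow K (p / 2) - M :=
  stmt5_general n s hsn p hp0 K σ hσpos hsort V hV hVK
end

section
/- Let X = [X^{(1)}, …, X^{(k)}] ∈ ℝ^{m×(kn)} where each block X^{(j)} ∈ ℝ^{m×n} has columns given by a (possibly different) polynomial map f^{(j)} : ℝ^d → ℝ^m of degree at most α evaluated at points in ℝ^d. Let φ be a q-order polynomial feature map on ℝ^m. Then rank(φ(X)) ≤ min{k·C(d+αq, αq), C(m+q, q), kn}. -/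
/-!
Each entry of the `j`-th block of `φ(X)` is the value at the sample point `z` of a polynomial
in `z` of degree at most `αq` (a monomial of degree `≤ q` in polynomials of degree `≤ α`). Hence the
block factors as a coefficient matrix times the matrix of values of the `C(d+αq, αq)` monomials of
degree `≤ αq`; stacking the blocks, `φ(X)` factors through `k · C(d+αq, αq)` dimensions. The other
two bounds are the numbers of rows and columns.
-/

/-- A `q`-order polynomial feature map on `ℝ^m`. -/
def IsPolyFeatureMap {m : ℕ} {ι : Type} (q : ℕ) (φ : (Fin m → ℝ) → ι → ℝ) : Prop :=
  ∃ e : ι ≃ {ν : Fin m →₀ ℕ // ν.sum (fun _ t => t) ≤ q}, ∃ c : ι → ℝ,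
    (∀ i, c i ≠ 0) ∧
    ∀ x i, φ x i = c i * ((e i : Fin m →₀ ℕ).prod fun k t => x k ^ t)

open MvPolynomial

namespace Finsupp

theorem sum_id_option {σ : Type*} (P : Option σ →₀ ℕ) :
    P.sum (fun _ t => t) = P none + P.some.sum (fun _ t => t) :=
  sum_option_index _ _ (fun _ => rfl) fun _ _ _ => rfl

variable (σ : Type*) (N : ℕ)

/-- Stars and bars with a slack variable: the exponent `N - deg μ` is put on `none`. -/
noncomputable def degreeLEEquivSym [DecidableEq σ] :
    {μ : σ →₀ ℕ // μ.sum (fun _ t => t) ≤ N} ≃ Sym (Option σ) N :=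
  Equiv.trans (β := {P : Option σ →₀ ℕ // P.sum (fun _ t => t) = N})
    { toFun := fun μ => ⟨optionElim (N - μ.1.sum fun _ t => t) μ.1, by
        simp [sum_id_option, Nat.sub_add_cancel μ.2]⟩
      invFun := fun P => ⟨P.1.some, by have := sum_id_option P.1; omega⟩
      left_inv := fun μ => by ext; simp
      right_inv := fun P => by
        ext (_ | a)
        · have := sum_id_option P.1
          simp only [optionElim_apply_none]
          omega
        · simp }
    (Sym.equivNatSum (Option σ) N).symm

instance finite_degreeLE [Finite σ] : Finite {μ : σ →₀ ℕ // μ.sum (fun _ t => t) ≤ N} := by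
  classical
  exact Finite.of_equiv _ (degreeLEEquivSym σ N).symm

theorem natCard_degreeLE [Finite σ] :
    Nat.card {μ : σ →₀ ℕ // μ.sum (fun _ t => t) ≤ N} = (Nat.card σ + N).choose N := by
  classical
  rw [Nat.card_congr (degreeLEEquivSym σ N), Sym.natCard_sym_eq_choose, Finite.card_option,
    Nat.add_right_comm, Nat.add_sub_cancel]

end Finsupp

namespace MvPolynomial

variable {R σ : Type*} [CommSemiring R]

theorem eval_eq_sum_degreeLE {N : ℕ}
    [Fintype {μ : σ →₀ ℕ // μ.sum (fun _ t => t) ≤ N}] {p : MvPolynomial σ R}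
    (hp : p.totalDegree ≤ N) (x : σ → R) :
    eval x p = ∑ μ : {μ : σ →₀ ℕ // μ.sum (fun _ t => t) ≤ N},
      coeff μ p * (μ : σ →₀ ℕ).prod fun i t => x i ^ t := by
  set S := Finset.univ.map (.subtype fun μ : σ →₀ ℕ => μ.sum (fun _ t => t) ≤ N)
  have hS : ∀ μ, μ ∈ S ↔ μ.sum (fun _ t => t) ≤ N := fun μ => by simp [S]
  rw [eval_eq, ← Finset.sum_subtype S hS fun μ => coeff μ p * μ.prod fun i t => x i ^ t]
  refine Finset.sum_subset (fun μ hμ => (hS μ).2 ((le_totalDegree hμ).trans hp))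
    (fun μ _ hμ => ?_)
  rw [notMem_support_iff.mp hμ, zero_mul]

theorem totalDegree_finsuppProd_pow_le {κ : Type*} (ν : κ →₀ ℕ) {p : κ → MvPolynomial σ R}
    {α : ℕ} (hp : ∀ k, (p k).totalDegree ≤ α) :
    (ν.prod fun k t => p k ^ t).totalDegree ≤ α * ν.sum (fun _ t => t) := by
  rw [Finsupp.prod, Finsupp.sum, Finset.mul_sum]
  refine (totalDegree_finsetProd _ _).trans (Finset.sum_le_sum fun k _ => ?_)
  exact (totalDegree_pow _ _).trans (by rw [mul_comm]; exact Nat.mul_le_mul_right _ (hp k))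

end MvPolynomial

theorem Matrix.rank_of_eval_le {K σ ι κ τ : Type*} [Field K] [Finite σ] [Fintype ι] [Fintype κ]
    [Fintype τ] (P : κ → ι → MvPolynomial σ K) {N : ℕ}
    (hP : ∀ j i, (P j i).totalDegree ≤ N) (z : κ → τ → σ → K) :
    (Matrix.of fun i (c : κ × τ) => eval (z c.1 c.2) (P c.1 i)).rank ≤
      Fintype.card κ * (Nat.card σ + N).choose N := by
  classical
  let _ := Fintype.ofFinite {μ : σ →₀ ℕ // μ.sum (fun _ t => t) ≤ N}
  let A : Matrix ι (κ × {μ : σ →₀ ℕ // μ.sum (fun _ t => t) ≤ N}) K :=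
    .of fun i r => coeff r.2 (P r.1 i)
  let B : Matrix (κ × {μ : σ →₀ ℕ // μ.sum (fun _ t => t) ≤ N}) (κ × τ) K :=
    .of fun r c => if r.1 = c.1 then (r.2 : σ →₀ ℕ).prod fun ℓ t => z c.1 c.2 ℓ ^ t else 0
  have hAB : Matrix.of (fun i (c : κ × τ) => eval (z c.1 c.2) (P c.1 i)) = A * B := by
    ext i ⟨j, t⟩
    simp [A, B, Matrix.mul_apply, Fintype.sum_prod_type, eval_eq_sum_degreeLE (hP j i)]
  rw [hAB]
  calc (A * B).rank ≤ A.rank := rank_mul_le_left A B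
    _ ≤ _ := A.rank_le_card_width
    _ = _ := by
      rw [Fintype.card_prod, Fintype.card_eq_nat_card, Fintype.card_eq_nat_card,
        Finsupp.natCard_degreeLE]

theorem IsPolyFeatureMap.exists_mvPolynomial_comp {σ : Type*} {m q α : ℕ} {ι : Type}
    {φ : (Fin m → ℝ) → ι → ℝ} (hφ : IsPolyFeatureMap q φ) {f : (σ → ℝ) → Fin m → ℝ}
    (hf : ∀ i, ∃ p : MvPolynomial σ ℝ, p.totalDegree ≤ α ∧ ∀ z, f z i = eval z p) :
    ∃ P : ι → MvPolynomial σ ℝ,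
      (∀ i, (P i).totalDegree ≤ α * q) ∧ ∀ z i, φ (f z) i = eval z (P i) := by
  obtain ⟨e, c, -, hφ⟩ := hφ
  choose p hp_deg hp_eval using hf
  refine ⟨fun i => .C (c i) * (e i : Fin m →₀ ℕ).prod fun ℓ t => p ℓ ^ t, fun i => ?_,
    fun z i => ?_⟩
  · refine (totalDegree_mul _ _).trans ?_
    rw [totalDegree_C, zero_add]
    exact (totalDegree_finsuppProd_pow_le _ hp_deg).trans
      (Nat.mul_le_mul_left _ (e i).2)
  · simp only [hφ, map_mul, eval_C, map_finsuppProd, map_pow, hp_eval]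

theorem stmt12_general (d α m n q k : ℕ)
    (ι : Type) [Fintype ι]
    (φ : (Fin m → ℝ) → ι → ℝ) (hφ : IsPolyFeatureMap q φ)
    (hcard : Fintype.card ι = (m + q).choose q)
    (X : Matrix (Fin m) (Fin k × Fin n) ℝ)
    (hX : ∀ j : Fin k,
      ∃ f : (Fin d → ℝ) → (Fin m → ℝ),
        (∀ i : Fin m, ∃ p : MvPolynomial (Fin d) ℝ,
          p.totalDegree ≤ α ∧ ∀ z, f z i = MvPolynomial.eval z p) ∧
        ∃ z : Fin n → (Fin d → ℝ), ∀ i t, X i (j, t) = f (z t) i)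
    (φX : Matrix ι (Fin k × Fin n) ℝ)
    (hφX : ∀ i c, φX i c = φ (fun t => X t c) i) :
    φX.rank ≤ min (k * (d + α * q).choose (α * q)) (min ((m + q).choose q) (k * n)) := by
  choose f hf z hz using hX
  choose P hP_deg hP_eval using fun j => hφ.exists_mvPolynomial_comp (hf j)
  have hφX_eq : φX = Matrix.of fun i c => eval (z c.1 c.2) (P c.1 i) := by
    ext i ⟨j, t⟩
    rw [hφX, Matrix.of_apply, ← hP_eval]
    exact congrArg (φ · i) (funext fun s => hz j s t)
  refine le_min ?_ (le_min ?_ ?_)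
  · simpa [hφX_eq] using Matrix.rank_of_eval_le P hP_deg z
  · exact hcard ▸ φX.rank_le_card_height
  · simpa using φX.rank_le_card_width

/-- if `X = [X⁽¹⁾, …, X⁽ᵏ⁾]` where each block has columns given by a
polynomial map `f⁽ʲ⁾ : ℝ^d → ℝ^m` of degree ≤ α, and `φ` is a `q`-order polynomial
feature map, then `rank φ(X) ≤ min (k·C(d+αq, αq)) (min (C(m+q,q)) (k·n))`. -/
theorem stmt12 (d α m n q k : ℕ) (hd : 0 < d) (hα : 0 < α) (hq : 0 < q) (hk : 0 < k)
    (ι : Type) [Fintype ι] [DecidableEq ι]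
    (φ : (Fin m → ℝ) → ι → ℝ) (hφ : IsPolyFeatureMap q φ)
    (hcard : Fintype.card ι = (m + q).choose q)
    (X : Matrix (Fin m) (Fin k × Fin n) ℝ)
    (hX : ∀ j : Fin k,
      ∃ f : (Fin d → ℝ) → (Fin m → ℝ),
        (∀ i : Fin m, ∃ p : MvPolynomial (Fin d) ℝ,
          p.totalDegree ≤ α ∧ ∀ z, f z i = MvPolynomial.eval z p) ∧
        ∃ z : Fin n → (Fin d → ℝ), ∀ i t, X i (j, t) = f (z t) i)
    (φX : Matrix ι (Fin k × Fin n) ℝ)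
    (hφX : ∀ i c, φX i c = φ (fun t => X t c) i) :
    φX.rank ≤ min (k * (d + α * q).choose (α * q)) (min ((m + q).choose q) (k * n)) :=
  stmt12_general d α m n q k ι φ hφ hcard X hX φX hφX
end
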